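/- arXiv:1006.3872 — 5 statements merged into one kernel-verified Lean document; each statement's English description precedes it below -/
import Mathlib

section
/- Every k^G-Galois object (for a finite group G over any field k) is a semisimple algebra. -/
variable (k : Type*) [Field k] (G : Type*) [Group G]

section GAlg
variable (A : Type*) [Ring A] [Algebra k A] [MulSemiringAction G A] [SMulCommClass G k A]

/-- `A` has no nontrivial `G`-invariant left ideals. -/
def NoInvariantLeftIdeals : Prop :=
  ∀ J : Submodule A A, (∀ (g : G), ∀ a ∈ J, g • a ∈ J) → J = ⊥ ∨ J = ⊤

/-- The subalgebra of `G`-invariants of `A` is reduced to the scalars `k`. -/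
def InvariantsTrivial : Prop :=
  ∀ a : A, (∀ g : G, g • a = a) → ∃ c : k, a = algebraMap k A c

/-- The characterization of `k^G`-Galois objects used throughout the paper:
`dim_k A = |G|`, no nontrivial `G`-invariant left ideals, and `A^G = k`. -/
def IsGaloisObjectTriple [Fintype G] : Prop :=
  Module.finrank k A = Fintype.card G ∧ NoInvariantLeftIdeals G A ∧ InvariantsTrivial k G A

end GAlg

section Can
open TensorProduct
variable [Fintype G]
variable (A : Type*) [Ring A] [Algebra k A] [MulSemiringAction G A] [SMulCommClass G k A]

/-- The canonical (Galois) map `A ⊗ A → A ⊗ k^G ≅ (G → A)`,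
`a ⊗ b ↦ (g ↦ a * (g • b))`, i.e. `a ⊗ b ↦ a b₍₀₎ ⊗ b₍₁₎` for the coaction
`ρ(b) = ∑ g, (g • b) ⊗ t_g`. -/
noncomputable def canMap : A ⊗[k] A →ₗ[k] (G → A) :=
  TensorProduct.lift
    (LinearMap.mk₂ k (fun a b => fun g => a * (g • b))
      (fun a a' b => by funext g; simp [add_mul])
      (fun c a b => by funext g; simp [smul_mul_assoc])
      (fun a b b' => by funext g; simp [smul_add, mul_add])
      (fun c a b => by funext g; show a * g • (c • b) = c • (a * g • b); rw [smul_comm g c b, mul_smul_comm]))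

/-- A `k^G`-Galois object: coinvariants equal `k` and the canonical map is bijective. -/
def IsGaloisObject : Prop :=
  InvariantsTrivial k G A ∧ Function.Bijective (canMap k G A)

end Can


set_option maxHeartbeats 1000000
section Aux

lemma aux_pi_semisimple {A : Type*} [Ring A] {ι : Type*} [Finite ι] [DecidableEq ι] (M : ι → Type*)
    [∀ i, AddCommGroup (M i)] [∀ i, Module A (M i)] [∀ i, IsSimpleModule A (M i)] :
    IsSemisimpleModule A (∀ i, M i) := by
  refine isSemisimpleModule_of_isSemisimpleModule_submodule'
    (p := fun i => LinearMap.range (LinearMap.single A M i)) (fun i => ?_)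
    (LinearMap.iSup_range_single A M)
  have : IsSimpleModule A (LinearMap.range (LinearMap.single A M i)) :=
    IsSimpleModule.congr (LinearEquiv.ofInjective (LinearMap.single A M i)
      (Pi.single_injective (M := M) i)).symm
  infer_instance

lemma aux_semisimple_of_jacobson (A : Type*) [Ring A] [Nontrivial A] [IsArtinian A A]
    (hJ : Ideal.jacobson (⊥ : Ideal A) = ⊥) : IsSemisimpleRing A := by
  classical
  obtain ⟨N, ⟨s, hs, rfl⟩, hmin⟩ := IsArtinian.set_has_minimal
    {I : Ideal A | ∃ t : Finset (Ideal A), (∀ J ∈ t, J.IsMaximal) ∧ I = t.inf id}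
    ⟨⊤, ∅, by simp, by simp⟩
  have hNle : ∀ M : Ideal A, M.IsMaximal → s.inf id ≤ M := by
    intro M hM
    have h1 : ((insert M s).inf id) ≤ s.inf id := Finset.inf_mono (Finset.subset_insert M s)
    have h2 : (insert M s).inf id ∈
        {I : Ideal A | ∃ t : Finset (Ideal A), (∀ J ∈ t, J.IsMaximal) ∧ I = t.inf id} :=
      ⟨insert M s, fun J hJ => by
        rcases Finset.mem_insert.1 hJ with rfl | hJ
        · exact hM
        · exact hs J hJ, rfl⟩
    have heq : (insert M s).inf id = s.inf id := by
      rcases h1.lt_or_eq with hlt | h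
      · exact absurd hlt (hmin _ h2)
      · exact h
    calc s.inf id = (insert M s).inf id := heq.symm
      _ ≤ id M := Finset.inf_le (Finset.mem_insert_self M s)
  have hbot : s.inf id = ⊥ := by
    rw [← le_bot_iff, ← hJ]
    exact le_sInf fun M hM => hNle M hM.2
  let f : A →ₗ[A] (∀ J : s, A ⧸ (J : Ideal A)) := LinearMap.pi fun J => (J : Ideal A).mkQ
  have hker : LinearMap.ker f = ⊥ := by
    rw [LinearMap.ker_pi]
    simp_rw [Submodule.ker_mkQ]
    refine le_bot_iff.1 ?_
    refine le_trans ?_ hbot.le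
    exact Finset.le_inf fun J hJ => iInf_le (fun J : s => (J : Ideal A)) ⟨J, hJ⟩
  haveI : ∀ J : s, IsSimpleModule A (A ⧸ (J : Ideal A)) := fun J =>
    isSimpleModule_iff_isCoatom.2 (hs J J.2).out
  haveI : IsSemisimpleModule A (∀ J : s, A ⧸ (J : Ideal A)) := aux_pi_semisimple _
  exact IsSemisimpleModule.congr (M := ↥(LinearMap.range f)) (LinearEquiv.ofInjective f (LinearMap.ker_eq_bot.1 hker))

lemma aux_jacobson_smul_mem {G A : Type*} [Group G] [Ring A] [MulSemiringAction G A]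
    (g : G) {x : A} (hx : x ∈ Ideal.jacobson (⊥ : Ideal A)) :
    g • x ∈ Ideal.jacobson (⊥ : Ideal A) := by
  rw [Ideal.mem_jacobson_iff] at hx ⊢
  intro y
  obtain ⟨z, hz⟩ := hx (g⁻¹ • y)
  refine ⟨g • z, ?_⟩
  rw [Ideal.mem_bot] at hz ⊢
  have h2 := congrArg (g • ·) hz
  simpa [smul_sub, smul_add, smul_mul', smul_inv_smul] using h2

end Aux

/-- Every `k^G`-Galois object is a semisimple algebra. -/
theorem galois_object_isSemisimple
    (k : Type*) [Field k] (G : Type*) [Group G] [Fintype G]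
    (A : Type*) [Ring A] [Algebra k A] [MulSemiringAction G A] [SMulCommClass G k A]
    (h : IsGaloisObject k G A) : IsSemisimpleRing A := by
  classical
  obtain ⟨hinv, hcan⟩ := h
  rcases subsingleton_or_nontrivial A with hA | hA
  · infer_instance
  obtain ⟨x, hx⟩ := hcan.2 (Pi.single (1 : G) (1 : A))
  obtain ⟨S, rfl⟩ := TensorProduct.exists_finset x
  -- the delta identity
  have hδ : ∀ g : G, (∑ p ∈ S, p.1 * (g • p.2)) = (Pi.single (1 : G) (1 : A) : G → A) g := by
    intro g
    have h1 := congrFun hx g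
    rw [map_sum] at h1
    simpa [canMap] using h1
  -- invariance of traces
  have hinvsum : ∀ (m : A) (hg : G), hg • (∑ g : G, g • m) = ∑ g : G, g • m := by
    intro m hg
    rw [Finset.smul_sum]
    simp_rw [smul_smul]
    exact Fintype.sum_equiv (Equiv.mulLeft hg) _ _ (fun g => rfl)
  -- key reproducing identity
  have key : ∀ c : A, ∑ p ∈ S, p.1 * (∑ g : G, g • (p.2 * c)) = c := by
    intro c
    have step : ∀ p : A × A, p.1 * (∑ g : G, g • (p.2 * c))
        = ∑ g : G, p.1 * ((g • p.2) * (g • c)) := by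
      intro p
      rw [Finset.mul_sum]
      exact Finset.sum_congr rfl fun g _ => by rw [smul_mul']
    calc ∑ p ∈ S, p.1 * (∑ g : G, g • (p.2 * c))
        = ∑ p ∈ S, ∑ g : G, p.1 * ((g • p.2) * (g • c)) :=
          Finset.sum_congr rfl fun p _ => step p
      _ = ∑ g : G, ∑ p ∈ S, p.1 * ((g • p.2) * (g • c)) := Finset.sum_comm
      _ = ∑ g : G, (∑ p ∈ S, p.1 * (g • p.2)) * (g • c) := by
          refine Finset.sum_congr rfl fun g _ => ?_
          rw [Finset.sum_mul]
          exact Finset.sum_congr rfl fun p _ => (mul_assoc _ _ _).symm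
      _ = ∑ g : G, ((Pi.single (1 : G) (1 : A) : G → A) g) * (g • c) :=
          Finset.sum_congr rfl fun g _ => by rw [hδ g]
      _ = c := by
          rw [Finset.sum_eq_single (1 : G)]
          · simp
          · intro g _ hg; simp [Pi.single_apply, hg]
          · intro habs; exact absurd (Finset.mem_univ _) habs
  -- finite dimensionality
  haveI hfin : Module.Finite k A := by
    refine ⟨⟨S.image Prod.fst, le_antisymm le_top ?_⟩⟩
    intro c _
    have hex : ∀ p : A × A, ∃ t : k, (∑ g : G, g • (p.2 * c)) = algebraMap k A t :=
      fun p => hinv _ (fun hg => hinvsum (p.2 * c) hg)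
    choose t ht using hex
    have : c = ∑ p ∈ S, t p • p.1 := by
      rw [← key c]
      refine Finset.sum_congr rfl fun p _ => ?_
      rw [ht p, ← Algebra.commutes, ← Algebra.smul_def]
    rw [this]
    refine Submodule.sum_mem _ fun p hp => Submodule.smul_mem _ _ ?_
    exact Submodule.subset_span (Finset.mem_coe.2 (Finset.mem_image_of_mem Prod.fst hp))
  haveI : IsArtinian A A := isArtinian_of_tower k inferInstance
  -- Jacobson radical is zero
  have hJ : Ideal.jacobson (⊥ : Ideal A) = ⊥ := by
    refine eq_bot_iff.2 fun j hj => ?_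
    have h1 : ∀ p ∈ S, (∑ g : G, g • ((p : A × A).2 * j)) = 0 := by
      intro p _
      obtain ⟨tp, htp⟩ := hinv _ (fun hg => hinvsum (p.2 * j) hg)
      have hmem : (∑ g : G, g • (p.2 * j)) ∈ Ideal.jacobson (⊥ : Ideal A) :=
        Submodule.sum_mem _ fun g _ =>
          aux_jacobson_smul_mem g (Ideal.mul_mem_left _ _ hj)
      by_cases htp0 : tp = 0
      · rw [htp, htp0, map_zero]
      · exfalso
        rw [htp] at hmem
        have htop : Ideal.jacobson (⊥ : Ideal A) = ⊤ :=
          Ideal.eq_top_of_isUnit_mem _ hmem ((Ne.isUnit htp0).map (algebraMap k A))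
        rw [Ideal.jacobson_eq_top_iff] at htop
        have h1A : (1 : A) ∈ (⊥ : Ideal A) := by rw [htop]; trivial
        exact one_ne_zero (Ideal.mem_bot.1 h1A)
    have h2 := key j
    rw [Finset.sum_congr rfl (fun p hp => by rw [h1 p hp, mul_zero])] at h2
    rw [Submodule.mem_bot, ← h2, Finset.sum_const_zero]
  exact aux_semisimple_of_jacobson A hJ
end

section
/- Let A be a G-algebra with an imprimitive system {e_1,…,e_n} of orthogonal central idempotents summing to 1 on which G acts transitively, and let S be the stabilizer of e_1. Then A is isomorphic as a G-algebra to the induced algebra Ind_S^G(e_1 A). -/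
set_option synthInstance.maxHeartbeats 1000000
set_option maxHeartbeats 1000000

variable (k : Type*) [Field k] (G : Type*) [Group G]

section Ind
variable (S : Subgroup G) (B : Type*) [Ring B] [Algebra k B]
  [MulSemiringAction S B] [SMulCommClass S k B]

/-- The induced algebra `Ind_S^G(B) = A_S(G,B) = {r : G → B | r(s g) = s • r(g)}`,
as a subalgebra of the function algebra `G → B`. -/
def indAlg : Subalgebra k (G → B) where
  carrier := {r | ∀ (s : S) (g : G), r (s * g) = s • r g}
  mul_mem' := by
    intro p q hp hq s g
    simp only [Pi.mul_apply, hp s g, hq s g, smul_mul']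
  add_mem' := by
    intro p q hp hq s g
    simp only [Pi.add_apply, hp s g, hq s g, smul_add]
  one_mem' := by intro s g; simp
  zero_mem' := by intro s g; simp
  algebraMap_mem' := by
    intro c s g
    simpa using (smul_algebraMap (A := B) (R := k) s c).symm

namespace indAlg

variable {G S B}

/-- The `G`-action on the induced algebra: `(g • r)(x) = r (x * g)`. -/
instance : MulSemiringAction G (indAlg k G S B) where
  smul g r := ⟨fun x => (r : G → B) (x * g), fun s x => by
    simpa [mul_assoc] using r.2 s (x * g)⟩
  one_smul r := by
    apply Subtype.ext; funext x
    show (r : G → B) (x * 1) = (r : G → B) x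
    rw [mul_one]
  mul_smul g h r := by
    apply Subtype.ext; funext x
    show (r : G → B) (x * (g * h)) = (r : G → B) (x * g * h)
    rw [mul_assoc]
  smul_zero g := rfl
  smul_add g r r' := rfl
  smul_one g := rfl
  smul_mul g r r' := rfl

@[simp] theorem smul_apply (g : G) (r : indAlg k G S B) (x : G) :
    ((g • r : indAlg k G S B) : G → B) x = (r : G → B) (x * g) := rfl

instance : SMulCommClass G k (indAlg k G S B) :=
  ⟨fun g c r => by apply Subtype.ext; funext x; show c • (r : G → B) (x * g) = _ ; rfl⟩

end indAlg
end Ind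
section Corner
variable {k : Type*} [Field k] {G : Type*} [Group G]
variable {A : Type*} [Ring A] [Algebra k A] [MulSemiringAction G A] [SMulCommClass G k A]

/-- The corner ring `eA` of an idempotent `e` (with unit `e`). -/
def Corner (e : A) (_ : IsIdempotentElem e) : Type _ :=
  {a : A // e * a = a ∧ a * e = a}

namespace Corner

variable (e : A) (he : IsIdempotentElem e)

instance : Ring (Corner e he) where
  add a b := ⟨a.1 + b.1, by rw [mul_add, a.2.1, b.2.1], by rw [add_mul, a.2.2, b.2.2]⟩
  mul a b := ⟨a.1 * b.1, by rw [← mul_assoc, a.2.1], by rw [mul_assoc, b.2.2]⟩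
  zero := ⟨0, by simp, by simp⟩
  one := ⟨e, he, he⟩
  neg a := ⟨-a.1, by rw [mul_neg, a.2.1], by rw [neg_mul, a.2.2]⟩
  add_assoc a b c := Subtype.ext (add_assoc _ _ _)
  zero_add a := Subtype.ext (zero_add _)
  add_zero a := Subtype.ext (add_zero _)
  add_comm a b := Subtype.ext (add_comm _ _)
  neg_add_cancel a := Subtype.ext (neg_add_cancel _)
  mul_assoc a b c := Subtype.ext (mul_assoc _ _ _)
  one_mul a := Subtype.ext a.2.1
  mul_one a := Subtype.ext a.2.2
  left_distrib a b c := Subtype.ext (left_distrib _ _ _)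
  right_distrib a b c := Subtype.ext (right_distrib _ _ _)
  zero_mul a := Subtype.ext (zero_mul _)
  mul_zero a := Subtype.ext (mul_zero _)
  nsmul n a := ⟨n • a.1, by rw [mul_smul_comm, a.2.1], by rw [smul_mul_assoc, a.2.2]⟩
  zsmul n a := ⟨n • a.1, by rw [mul_smul_comm, a.2.1], by rw [smul_mul_assoc, a.2.2]⟩
  nsmul_zero a := Subtype.ext (zero_smul ℕ _)
  nsmul_succ n a := Subtype.ext (succ_nsmul _ n)
  zsmul_zero' a := Subtype.ext (zero_smul ℤ _)
  zsmul_succ' n a := Subtype.ext (SubNegMonoid.zsmul_succ' n _)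
  zsmul_neg' n a := Subtype.ext (SubNegMonoid.zsmul_neg' n _)

instance : Algebra k (Corner e he) where
  algebraMap :=
  { toFun := fun c => ⟨c • e, by rw [mul_smul_comm, he], by rw [smul_mul_assoc, he]⟩
    map_one' := Subtype.ext (one_smul k e)
    map_mul' := fun c d => Subtype.ext (by
      show (c * d) • e = (c • e) * (d • e)
      rw [smul_mul_assoc, mul_smul_comm, he, mul_smul])
    map_zero' := Subtype.ext (zero_smul k e)
    map_add' := fun c d => Subtype.ext (add_smul c d e) }
  commutes' c a := Subtype.ext (by
    show (c • e) * a.1 = a.1 * (c • e)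
    rw [smul_mul_assoc, mul_smul_comm, a.2.1, a.2.2])
  smul c a := ⟨c • a.1, by rw [mul_smul_comm, a.2.1], by rw [smul_mul_assoc, a.2.2]⟩
  smul_def' c a := Subtype.ext (by
    show c • a.1 = (c • e) * a.1
    rw [smul_mul_assoc, a.2.1])

/-- The stabilizer of `e` acts on the corner ring `eA`. -/
instance : MulSemiringAction (MulAction.stabilizer G e) (Corner e he) where
  smul s a := ⟨(s : G) • a.1,
    by
      have h : (s : G) • (e * a.1) = (s : G) • a.1 := by rw [a.2.1]
      rwa [smul_mul', (show (s : G) • e = e from s.2)] at h,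
    by
      have h : (s : G) • (a.1 * e) = (s : G) • a.1 := by rw [a.2.2]
      rwa [smul_mul', (show (s : G) • e = e from s.2)] at h⟩
  one_smul a := Subtype.ext (one_smul G a.1)
  mul_smul s t a := Subtype.ext (mul_smul (s : G) (t : G) a.1)
  smul_zero s := Subtype.ext (smul_zero (s : G))
  smul_add s a b := Subtype.ext (smul_add (s : G) a.1 b.1)
  smul_one s := Subtype.ext s.2
  smul_mul s a b := Subtype.ext (smul_mul' (s : G) a.1 b.1)

instance : SMulCommClass (MulAction.stabilizer G e) k (Corner e he) :=
  ⟨fun s c a => Subtype.ext (smul_comm (s : G) c a.1)⟩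

end Corner
end Corner

section AuxHom
variable {k : Type*} [Field k] {G : Type*} [Group G]
  {A : Type*} [Ring A] [Algebra k A] [MulSemiringAction G A] [SMulCommClass G k A]

theorem aux_key (e0 : A) (he : IsIdempotentElem e0)
    (hc : ∀ b : A, b * e0 = e0 * b) (x y : A) :
    (e0 * x) * (e0 * y) = e0 * (x * y) := by
  rw [mul_assoc, ← mul_assoc x, hc x, ← mul_assoc, ← mul_assoc, he, mul_assoc]

/-- The canonical algebra map `A → Ind_S^G(e₀A)`, `a ↦ (g ↦ e₀(g•a))`. -/
def impHom (e0 : A) (he : IsIdempotentElem e0)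
    (hc : ∀ b : A, b * e0 = e0 * b) :
    A →ₐ[k] indAlg k G (MulAction.stabilizer G e0) (Corner e0 he) where
  toFun a := ⟨fun g => ⟨e0 * (g • a), by rw [← mul_assoc, he], by
      rw [mul_assoc, hc, ← mul_assoc, he]⟩, fun s g => Subtype.ext <| by
      show e0 * ((↑s * g) • a) = (s : G) • (e0 * (g • a))
      rw [smul_mul', s.2, mul_smul]⟩
  map_one' := Subtype.ext <| funext fun g => Subtype.ext <| by
      show e0 * (g • (1 : A)) = e0
      rw [smul_one, mul_one]
  map_mul' a b := Subtype.ext <| funext fun g => Subtype.ext <| by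
      show e0 * (g • (a * b)) = (e0 * (g • a)) * (e0 * (g • b))
      rw [smul_mul', aux_key e0 he hc]
  map_zero' := Subtype.ext <| funext fun g => Subtype.ext <| by
      show e0 * (g • (0 : A)) = 0
      rw [smul_zero, mul_zero]
  map_add' a b := Subtype.ext <| funext fun g => Subtype.ext <| by
      show e0 * (g • (a + b)) = e0 * (g • a) + e0 * (g • b)
      rw [smul_add, mul_add]
  commutes' c := Subtype.ext <| funext fun g => Subtype.ext <| by
      show e0 * (g • (algebraMap k A c)) = c • e0
      rw [smul_algebraMap, Algebra.algebraMap_eq_smul_one, mul_smul_comm, mul_one]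

end AuxHom

/-- if a `G`-algebra `A` has an imprimitive system `e₁,…,eₙ` of orthogonal
central idempotents summing to `1`, permuted transitively by `G`, and `S` is the
stabilizer of `e₁`, then `A ≅ Ind_S^G(e₁A)` as `G`-algebras. -/
theorem imprimitive_iso_induced
    (k : Type*) [Field k] (G : Type*) [Group G]
    (A : Type*) [Ring A] [Algebra k A] [MulSemiringAction G A] [SMulCommClass G k A]
    (n : ℕ) (hn : 0 < n) (e : Fin n → A)
    (hidem : ∀ i, IsIdempotentElem (e i))
    (hcentral : ∀ i, e i ∈ Set.center A)
    (horth : ∀ i j, i ≠ j → e i * e j = 0)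
    (hsum : ∑ i, e i = 1)
    (hperm : ∀ (g : G) (i : Fin n), ∃ j, g • e i = e j)
    (htrans : ∀ i j : Fin n, ∃ g : G, g • e i = e j) :
    ∃ φ : A ≃ₐ[k] indAlg k G (MulAction.stabilizer G (e ⟨0, hn⟩))
        (Corner (e ⟨0, hn⟩) (hidem ⟨0, hn⟩)),
      ∀ (g : G) (a : A), φ (g • a) = g • φ a := by
  classical
  set z : Fin n := ⟨0, hn⟩ with hz
  set e0 : A := e z with he0
  have he : IsIdempotentElem e0 := hidem z
  have hc : ∀ b : A, b * e0 = e0 * b := fun b =>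
    (Semigroup.mem_center_iff.1 (hcentral z)) b
  set φ₀ : A →ₐ[k] indAlg k G (MulAction.stabilizer G e0) (Corner e0 he) :=
    impHom e0 he hc with hφ₀
  have hφval : ∀ (a : A) (g : G), (((φ₀ a : G → Corner e0 he)) g).1 = e0 * (g • a) :=
    fun a g => rfl
  choose σ hσ using fun j => htrans j z
  have hej : ∀ j, e j = (σ j)⁻¹ • e0 := fun j => by
    rw [he0, ← hσ j, inv_smul_smul]
  have hinj : Function.Injective φ₀ := by
    rw [injective_iff_map_eq_zero]
    intro a h
    have h1 : ∀ g : G, e0 * (g • a) = 0 := fun g =>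
      congrArg Subtype.val (congrFun (congrArg Subtype.val h) g)
    have h2 : ∀ j, e j * a = 0 := by
      intro j
      have h3 := congrArg (fun x => (σ j)⁻¹ • x) (h1 (σ j))
      simp only [smul_mul', inv_smul_smul, smul_zero] at h3
      rw [hej j]; exact h3
    calc a = (∑ i, e i) * a := by rw [hsum, one_mul]
      _ = ∑ i, e i * a := Finset.sum_mul _ _ _
      _ = 0 := Finset.sum_eq_zero fun i _ => h2 i
  have hsurj : Function.Surjective φ₀ := by
    intro r
    set v : Fin n → A := fun j => ((r : G → Corner e0 he) (σ j)).1 with hv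
    refine ⟨∑ j, (σ j)⁻¹ • v j, ?_⟩
    apply Subtype.ext; funext x; apply Subtype.ext
    have key : ∀ j, e0 * ((x * (σ j)⁻¹) • v j) =
        (x • e j) * ((r : G → Corner e0 he) x).1 := by
      intro j
      set t : G := x * (σ j)⁻¹ with htdef
      have hval : e0 * v j = v j := ((r : G → Corner e0 he) (σ j)).2.1
      have ht : t • e0 = x • e j := by rw [htdef, mul_smul, ← hej j]
      obtain ⟨m, hm⟩ := hperm x j
      by_cases hmz : m = z
      · have htS : t ∈ MulAction.stabilizer G e0 := by
          rw [MulAction.mem_stabilizer_iff, ht, hm, hmz]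
        have hr : ((r : G → Corner e0 he) x).1 = t • v j := by
          have h5 := r.2 ⟨t, htS⟩ (σ j)
          have hg : t * σ j = x := inv_mul_cancel_right x (σ j)
          calc ((r : G → Corner e0 he) x).1
              = ((r : G → Corner e0 he) (t * σ j)).1 := by rw [hg]
            _ = t • v j := congrArg Subtype.val h5
        rw [hr, hm, hmz]
      · have hlhs : e0 * (t • v j) = 0 := by
          conv_lhs => rw [← hval, smul_mul', ht, hm, ← mul_assoc,
            horth z m (fun hh => hmz hh.symm), zero_mul]
        have hrhs : (x • e j) * ((r : G → Corner e0 he) x).1 = 0 := by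
          rw [hm, ← ((r : G → Corner e0 he) x).2.1, ← mul_assoc,
            horth m z hmz, zero_mul]
        rw [hlhs, hrhs]
    show e0 * (x • ∑ j, (σ j)⁻¹ • v j) = ((r : G → Corner e0 he) x).1
    rw [Finset.smul_sum, Finset.mul_sum]
    simp only [smul_smul]
    calc (∑ j, e0 * ((x * (σ j)⁻¹) • v j))
        = ∑ j, (x • e j) * ((r : G → Corner e0 he) x).1 :=
          Finset.sum_congr rfl fun j _ => key j
      _ = (x • ∑ j, e j) * ((r : G → Corner e0 he) x).1 := by
          rw [Finset.smul_sum, Finset.sum_mul]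
      _ = ((r : G → Corner e0 he) x).1 := by rw [hsum, smul_one, one_mul]
  refine ⟨AlgEquiv.ofBijective φ₀ ⟨hinj, hsurj⟩, fun g a => ?_⟩
  show φ₀ (g • a) = g • φ₀ a
  apply Subtype.ext; funext x; apply Subtype.ext
  show e0 * (x • (g • a)) = e0 * ((x * g) • a)
  rw [mul_smul]
end

section
/- Let S, S' be subgroups of a finite group G, A a simple S-algebra, B a simple S'-algebra. Then Ind_S^G(A) ≅ Ind_{S'}^G(B) as G-algebras if and only if there exists g ∈ G with S = g^{-1}S'g and A ≅ B^{(g)} as S-algebras. -/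
set_option synthInstance.maxHeartbeats 1000000
set_option maxHeartbeats 1000000

variable (k : Type*) [Field k] (G : Type*) [Group G]

section Aux

namespace indAlg

attribute [local instance] Classical.propDecidable

variable {k : Type*} [Field k] {G : Type*} [Group G]
variable {S : Subgroup G} {B : Type*} [Ring B] [Algebra k B]
  [MulSemiringAction S B] [SMulCommClass S k B]

/-- The element of `Ind_S^G(B)` supported on the right coset `S g` whose value at `g` is `b`. -/
noncomputable def cElem (g : G) (b : B) : indAlg k G S B :=
  ⟨fun x => if h : x * g⁻¹ ∈ S then (⟨x * g⁻¹, h⟩ : S) • b else 0, by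
    intro s x
    dsimp only
    have hx : (s : G) * x * g⁻¹ = (s : G) * (x * g⁻¹) := mul_assoc _ _ _
    by_cases h : x * g⁻¹ ∈ S
    · have h2 : (s : G) * x * g⁻¹ ∈ S := by rw [hx]; exact mul_mem s.2 h
      rw [dif_pos h2, dif_pos h]
      have he : (⟨(s : G) * x * g⁻¹, h2⟩ : S) = s * ⟨x * g⁻¹, h⟩ := by
        apply Subtype.ext; simp [hx]
      rw [he, mul_smul]
    · have h2 : ¬ ((s : G) * x * g⁻¹ ∈ S) := by
        rw [hx]; intro hc
        exact h (by simpa using mul_mem (inv_mem s.2) hc)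
      rw [dif_neg h2, dif_neg h, smul_zero]⟩

theorem cElem_apply (g : G) (b : B) (x : G) :
    (cElem (k := k) (S := S) g b : G → B) x
      = if h : x * g⁻¹ ∈ S then (⟨x * g⁻¹, h⟩ : S) • b else 0 := rfl

@[simp] theorem cElem_self (g : G) (b : B) : (cElem (k := k) (S := S) g b : G → B) g = b := by
  have h : g * g⁻¹ ∈ S := by simpa using one_mem S
  rw [cElem_apply, dif_pos h]
  have : (⟨g * g⁻¹, h⟩ : S) = 1 := by apply Subtype.ext; simp
  rw [this, one_smul]

theorem cElem_apply_of_not_mem (g : G) (b : B) {x : G} (hx : x * g⁻¹ ∉ S) :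
    (cElem (k := k) (S := S) g b : G → B) x = 0 := dif_neg hx

theorem cElem_one_apply (g : G) (x : G) :
    (cElem (k := k) (S := S) g (1 : B) : G → B) x = if x * g⁻¹ ∈ S then 1 else 0 := by
  rw [cElem_apply]
  by_cases h : x * g⁻¹ ∈ S
  · rw [dif_pos h, if_pos h, smul_one]
  · rw [dif_neg h, if_neg h]

theorem mul_apply (p q : indAlg k G S B) (x : G) :
    ((p * q : indAlg k G S B) : G → B) x = (p : G → B) x * (q : G → B) x := rfl

theorem add_apply (p q : indAlg k G S B) (x : G) :
    ((p + q : indAlg k G S B) : G → B) x = (p : G → B) x + (q : G → B) x := rfl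

theorem ksmul_apply (c : k) (p : indAlg k G S B) (x : G) :
    ((c • p : indAlg k G S B) : G → B) x = c • (p : G → B) x := rfl

theorem cElem_mul (g : G) (b b' : B) :
    cElem (k := k) (S := S) g b * cElem g b' = cElem g (b * b') := by
  apply Subtype.ext; funext x
  rw [mul_apply, cElem_apply, cElem_apply, cElem_apply]
  by_cases h : x * g⁻¹ ∈ S
  · rw [dif_pos h, dif_pos h, dif_pos h, smul_mul']
  · rw [dif_neg h, dif_neg h, dif_neg h, mul_zero]

theorem cElem_add (g : G) (b b' : B) :
    cElem (k := k) (S := S) g b + cElem g b' = cElem g (b + b') := by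
  apply Subtype.ext; funext x
  rw [add_apply, cElem_apply, cElem_apply, cElem_apply]
  by_cases h : x * g⁻¹ ∈ S
  · rw [dif_pos h, dif_pos h, dif_pos h, smul_add]
  · rw [dif_neg h, dif_neg h, dif_neg h, add_zero]

theorem cElem_ksmul (g : G) (c : k) (b : B) :
    cElem (k := k) (S := S) g (c • b) = c • cElem g b := by
  apply Subtype.ext; funext x
  rw [ksmul_apply, cElem_apply, cElem_apply]
  by_cases h : x * g⁻¹ ∈ S
  · rw [dif_pos h, dif_pos h, smul_comm]
  · rw [dif_neg h, dif_neg h, smul_zero]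

/-- a value of `p` at a point of the coset `S g` in terms of its value at `g`. -/
theorem apply_coset (p : indAlg k G S B) {g x : G} (hx : x * g⁻¹ ∈ S) :
    (p : G → B) x = (⟨x * g⁻¹, hx⟩ : S) • (p : G → B) g := by
  have hx2 : x = ((⟨x * g⁻¹, hx⟩ : S) : G) * g := by simp
  calc (p : G → B) x = (p : G → B) (((⟨x * g⁻¹, hx⟩ : S) : G) * g) := by rw [← hx2]
    _ = (⟨x * g⁻¹, hx⟩ : S) • (p : G → B) g := p.2 _ _

/-- Two elements supported on `S g` and agreeing at `g` are equal. -/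
theorem ext_coset {g : G} {p q : indAlg k G S B}
    (hp : ∀ x, x * g⁻¹ ∉ S → (p : G → B) x = 0)
    (hq : ∀ x, x * g⁻¹ ∉ S → (q : G → B) x = 0)
    (h : (p : G → B) g = (q : G → B) g) : p = q := by
  apply Subtype.ext; funext x
  by_cases hx : x * g⁻¹ ∈ S
  · rw [apply_coset p hx, apply_coset q hx, h]
  · rw [hp x hx, hq x hx]

theorem cElem_one_central (g : G) (p : indAlg k G S B) :
    cElem (k := k) (S := S) g (1 : B) * p = p * cElem g 1 := by
  apply Subtype.ext; funext x
  rw [mul_apply, mul_apply, cElem_one_apply]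
  by_cases h : x * g⁻¹ ∈ S
  · rw [if_pos h, one_mul, mul_one]
  · rw [if_neg h, zero_mul, mul_zero]

theorem idem_mul_of_supp {g : G} {p : indAlg k G S B}
    (hp : ∀ x, x * g⁻¹ ∉ S → (p : G → B) x = 0) :
    cElem (k := k) (S := S) g (1 : B) * p = p := by
  apply Subtype.ext; funext x
  rw [mul_apply, cElem_one_apply]
  by_cases h : x * g⁻¹ ∈ S
  · rw [if_pos h, one_mul]
  · rw [if_neg h, zero_mul, hp x h]

theorem supp_of_idem_mul {g : G} {p : indAlg k G S B}
    (hp : cElem (k := k) (S := S) g (1 : B) * p = p) :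
    ∀ x, x * g⁻¹ ∉ S → (p : G → B) x = 0 := by
  intro x hx
  have h2 := congrArg (fun r : indAlg k G S B => (r : G → B) x) hp
  rw [mul_apply, cElem_one_apply, if_neg hx, zero_mul] at h2
  exact h2.symm

end indAlg

end Aux
theorem centralIdem_eq_zero_or_one {R : Type*} [Ring R] (hR : IsSimpleRing R) {c : R}
    (hc : c * c = c) (hcomm : ∀ b : R, c * b = b * c) : c = 0 ∨ c = 1 := by
  let I : TwoSidedIdeal R := TwoSidedIdeal.mk' {x | x * c = x}
    (by simp)
    (fun {x y} hx hy => by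
      simp only [Set.mem_setOf_eq] at *; rw [add_mul, hx, hy])
    (fun {x} hx => by simp only [Set.mem_setOf_eq] at *; rw [neg_mul, hx])
    (fun {x y} hy => by simp only [Set.mem_setOf_eq] at *; rw [mul_assoc, hy])
    (fun {x y} hx => by
      simp only [Set.mem_setOf_eq] at *
      rw [mul_assoc, ← hcomm y, ← mul_assoc, hx])
  have hcI : c ∈ I := by
    simpa [I, TwoSidedIdeal.mem_mk'] using hc
  rcases hR.simple.eq_bot_or_eq_top I with h | h
  · left
    rw [h, TwoSidedIdeal.mem_bot] at hcI
    exact hcI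
  · right
    have h1 : (1 : R) ∈ I := by rw [h]; exact TwoSidedIdeal.mem_top R
    rw [TwoSidedIdeal.mem_mk', Set.mem_setOf_eq, one_mul] at h1
    exact h1

set_option maxHeartbeats 10000000 in
/-- for simple algebras, `Ind_S^G(A) ≅ Ind_{S'}^G(B)` as `G`-algebras iff
`S = g⁻¹S'g` for some `g ∈ G` and `A ≅ B^{(g)}` as `S`-algebras, where `B^{(g)}` is `B`
with the `g⁻¹S'g`-action `h ·_g b = (g h g⁻¹) · b`. -/
theorem induced_iso_iff_conjugate
    (k : Type*) [Field k] (G : Type*) [Group G]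
    (S S' : Subgroup G)
    (A : Type*) [Ring A] [Algebra k A] [MulSemiringAction S A] [SMulCommClass S k A]
    (B : Type*) [Ring B] [Algebra k B] [MulSemiringAction S' B] [SMulCommClass S' k B]
    (hA : IsSimpleRing A) (hB : IsSimpleRing B) :
    (∃ ψ : indAlg k G S A ≃ₐ[k] indAlg k G S' B,
        ∀ (g : G) (r : indAlg k G S A), ψ (g • r) = g • ψ r) ↔
    (∃ (g : G) (hconj : ∀ s : G, s ∈ S ↔ g * s * g⁻¹ ∈ S') (φ : A ≃ₐ[k] B),
        ∀ (s : G) (hs : s ∈ S) (a : A),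
          φ ((⟨s, hs⟩ : S) • a) = (⟨g * s * g⁻¹, (hconj s).mp hs⟩ : S') • φ a) := by
  classical
  haveI := hA; haveI := hB
  letI i1 : SMul G (indAlg k G S A) := inferInstance
  letI i2 : SMul G (indAlg k G S' B) := inferInstance
  constructor
  · rintro ⟨ψ, hψ⟩
    obtain ⟨eA, heA⟩ : ∃ e : indAlg k G S A, e = indAlg.cElem 1 1 := ⟨_, rfl⟩
    have heA_apply : ∀ x : G, (eA : G → A) x = if x ∈ S then 1 else 0 := by
      intro x; rw [heA, indAlg.cElem_one_apply]; simp
    obtain ⟨f, hf⟩ : ∃ f : indAlg k G S' B, f = ψ eA := ⟨_, rfl⟩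
    have hff : f * f = f := by rw [hf, heA, ← map_mul, indAlg.cElem_mul, one_mul]
    have hfcomm : ∀ q : indAlg k G S' B, f * q = q * f := by
      intro q
      have hq : q = ψ (ψ.symm q) := (ψ.apply_symm_apply q).symm
      rw [hq, hf, heA, ← map_mul, ← map_mul, indAlg.cElem_one_central]
    have hfval : ∀ x : G, (f : G → B) x = 0 ∨ (f : G → B) x = 1 := by
      intro x
      apply centralIdem_eq_zero_or_one hB
      · have := congrArg (fun r : indAlg k G S' B => (r : G → B) x) hff
        simpa only [indAlg.mul_apply] using this
      · intro b
        have h2 := congrArg (fun r : indAlg k G S' B => (r : G → B) x)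
          (hfcomm (indAlg.cElem x b))
        simpa only [indAlg.mul_apply, indAlg.cElem_self] using h2
    have hfne : f ≠ 0 := by
      intro h0
      have he0 : eA = 0 := by
        apply ψ.injective; rw [← hf, h0, map_zero]
      have h1 := congrArg (fun r : indAlg k G S A => (r : G → A) 1) he0
      simp only [heA_apply 1, if_pos (one_mem S), ZeroMemClass.coe_zero, Pi.zero_apply] at h1
      exact one_ne_zero h1
    obtain ⟨g, hg1⟩ : ∃ g : G, (f : G → B) g = 1 := by
      by_contra hcon
      push_neg at hcon
      apply hfne
      apply Subtype.ext; funext x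
      simp only [ZeroMemClass.coe_zero, Pi.zero_apply]
      exact (hfval x).resolve_right (hcon x)
    obtain ⟨c, hc⟩ : ∃ c : indAlg k G S A, c = ψ.symm (indAlg.cElem g 1) := ⟨_, rfl⟩
    have hgc : indAlg.cElem (k := k) (S := S') g (1 : B) * f = indAlg.cElem g 1 := by
      apply Subtype.ext; funext x
      rw [indAlg.mul_apply, indAlg.cElem_one_apply]
      by_cases h : x * g⁻¹ ∈ S'
      · rw [if_pos h, one_mul, indAlg.apply_coset f h, hg1, smul_one]
      · rw [if_neg h, zero_mul]
    have hcc : c * c = c := by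
      rw [hc, ← map_mul, indAlg.cElem_mul, one_mul]
    have hccomm : ∀ q : indAlg k G S A, c * q = q * c := by
      intro q
      have hq : q = ψ.symm (ψ q) := (ψ.symm_apply_apply q).symm
      rw [hq, hc, ← map_mul, ← map_mul, indAlg.cElem_one_central]
    have hcval : ∀ x : G, (c : G → A) x = 0 ∨ (c : G → A) x = 1 := by
      intro x
      apply centralIdem_eq_zero_or_one hA
      · have := congrArg (fun r : indAlg k G S A => (r : G → A) x) hcc
        simpa only [indAlg.mul_apply] using this
      · intro a
        have h2 := congrArg (fun r : indAlg k G S A => (r : G → A) x)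
          (hccomm (indAlg.cElem x a))
        simpa only [indAlg.mul_apply, indAlg.cElem_self] using h2
    have hcmul : eA * c = c := by
      apply ψ.injective
      rw [map_mul, hc, ψ.apply_symm_apply, ← hf, hfcomm, hgc]
    have hcsupp : ∀ x, x * (1 : G)⁻¹ ∉ S → (c : G → A) x = 0 :=
      indAlg.supp_of_idem_mul (heA ▸ hcmul)
    have hcne : c ≠ 0 := by
      intro h0
      have hce : indAlg.cElem (k := k) (S := S') g (1 : B) = 0 := by
        rw [← ψ.apply_symm_apply (indAlg.cElem g 1), ← hc, h0, map_zero]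
      have h1 := congrArg (fun r : indAlg k G S' B => (r : G → B) g) hce
      simp only [indAlg.cElem_self, ZeroMemClass.coe_zero, Pi.zero_apply] at h1
      exact one_ne_zero h1
    have hceA : c = eA := by
      obtain ⟨x₀, hx₀⟩ : ∃ x, (c : G → A) x ≠ 0 := by
        by_contra hcon; push_neg at hcon
        exact hcne (Subtype.ext (funext fun x => by simpa using hcon x))
      have hx₀S : x₀ * (1 : G)⁻¹ ∈ S := by
        by_contra h; exact hx₀ (hcsupp x₀ h)
      have hx1 : (c : G → A) x₀ = 1 := (hcval x₀).resolve_left hx₀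
      have hc1 : (c : G → A) 1 = 1 := by
        have hco := indAlg.apply_coset c hx₀S
        rw [hx1] at hco
        rcases hcval 1 with h | h
        · rw [h, smul_zero] at hco; exact absurd hco one_ne_zero
        · exact h
      apply Subtype.ext; funext x
      rw [heA_apply]
      by_cases hx : x ∈ S
      · rw [if_pos hx]
        have hxS : x * (1 : G)⁻¹ ∈ S := by simpa using hx
        rw [indAlg.apply_coset c hxS, hc1, smul_one]
      · rw [if_neg hx]
        exact hcsupp x (by simpa using hx)
    have hfg : f = indAlg.cElem (k := k) (S := S') g (1 : B) := by
      have h2 := congrArg ψ hceA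
      rw [hc, ψ.apply_symm_apply, ← hf] at h2
      exact h2.symm
    have hsmul_eA : ∀ s : G, s ∈ S ↔ s • eA = eA := by
      intro s
      constructor
      · intro hs
        apply Subtype.ext; funext x
        rw [indAlg.smul_apply, heA_apply, heA_apply]
        by_cases hx : x ∈ S
        · rw [if_pos hx, if_pos (mul_mem hx hs)]
        · rw [if_neg hx, if_neg (fun hmem => hx (by simpa using mul_mem hmem (inv_mem hs)))]
      · intro hs
        have h1 := congrArg (fun r : indAlg k G S A => (r : G → A) 1) hs
        simp only [indAlg.smul_apply, one_mul] at h1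
        rw [heA_apply, heA_apply, if_pos (one_mem S)] at h1
        by_contra hns
        rw [if_neg hns] at h1
        exact one_ne_zero h1.symm
    have hsmul_f : ∀ s : G, g * s * g⁻¹ ∈ S' ↔ s • f = f := by
      intro s
      constructor
      · intro hs
        apply Subtype.ext; funext x
        rw [indAlg.smul_apply, hfg, indAlg.cElem_one_apply, indAlg.cElem_one_apply]
        have key : x * s * g⁻¹ ∈ S' ↔ x * g⁻¹ ∈ S' := by
          have hxe : x * s * g⁻¹ = (x * g⁻¹) * (g * s * g⁻¹) := by group
          rw [hxe]
          exact mul_mem_cancel_right hs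
        by_cases hx : x * g⁻¹ ∈ S'
        · rw [if_pos (key.mpr hx), if_pos hx]
        · rw [if_neg (fun hmem => hx (key.mp hmem)), if_neg hx]
      · intro hs
        have h1 := congrArg (fun r : indAlg k G S' B => (r : G → B) g) hs
        simp only [indAlg.smul_apply] at h1
        rw [hg1, hfg, indAlg.cElem_one_apply] at h1
        by_contra hns
        rw [if_neg hns] at h1
        exact one_ne_zero h1.symm
    have hlink : ∀ s : G, s • eA = eA ↔ s • f = f := by
      intro s
      constructor
      · intro h; rw [hf, ← hψ, h]
      · intro h
        apply ψ.injective
        rw [hψ, ← hf, h, hf]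
    have hconj : ∀ s : G, s ∈ S ↔ g * s * g⁻¹ ∈ S' := by
      intro s
      rw [hsmul_eA s, hlink s, ← hsmul_f s]
    have hsuppψ : ∀ a : A, ∀ x, x * g⁻¹ ∉ S' → (ψ (indAlg.cElem 1 a) : G → B) x = 0 := by
      intro a
      apply indAlg.supp_of_idem_mul (g := g)
      have h1 : eA * indAlg.cElem (k := k) (S := S) 1 a = indAlg.cElem 1 a := by
        rw [heA]
        exact indAlg.idem_mul_of_supp (fun x hx => indAlg.cElem_apply_of_not_mem 1 a hx)
      rw [← hfg, hf, ← map_mul, h1]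
    have hsuppψs : ∀ b : B, ∀ x, x * (1 : G)⁻¹ ∉ S →
        (ψ.symm (indAlg.cElem g b) : G → A) x = 0 := by
      intro b
      apply indAlg.supp_of_idem_mul (g := (1 : G))
      have h1 : indAlg.cElem (k := k) (S := S') g (1 : B) * indAlg.cElem g b
          = indAlg.cElem g b :=
        indAlg.idem_mul_of_supp (fun x hx => indAlg.cElem_apply_of_not_mem g b hx)
      have h2 : indAlg.cElem (k := k) (S := S) (1 : G) (1 : A)
          = ψ.symm (indAlg.cElem g 1) := by
        rw [← heA, ← hc, hceA]
      rw [h2, ← map_mul, h1]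
    refine ⟨g, hconj,
      { toFun := fun a => (ψ (indAlg.cElem 1 a) : G → B) g,
        invFun := fun b => (ψ.symm (indAlg.cElem g b) : G → A) 1,
        left_inv := ?_, right_inv := ?_,
        map_mul' := ?_, map_add' := ?_, commutes' := ?_ }, ?_⟩
    · intro a
      dsimp only
      have key : indAlg.cElem (k := k) (S := S') g ((ψ (indAlg.cElem 1 a) : G → B) g)
          = ψ (indAlg.cElem 1 a) := by
        apply indAlg.ext_coset (g := g)
        · exact fun x hx => indAlg.cElem_apply_of_not_mem g _ hx
        · exact hsuppψ a
        · rw [indAlg.cElem_self]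
      rw [key, ψ.symm_apply_apply, indAlg.cElem_self]
    · intro b
      dsimp only
      have key : indAlg.cElem (k := k) (S := S) 1 ((ψ.symm (indAlg.cElem g b) : G → A) 1)
          = ψ.symm (indAlg.cElem g b) := by
        apply indAlg.ext_coset (g := (1 : G))
        · exact fun x hx => indAlg.cElem_apply_of_not_mem 1 _ hx
        · exact hsuppψs b
        · rw [indAlg.cElem_self]
      rw [key, ψ.apply_symm_apply, indAlg.cElem_self]
    · intro a a'
      rw [← indAlg.cElem_mul, map_mul, indAlg.mul_apply]
    · intro a a'
      rw [← indAlg.cElem_add, map_add, indAlg.add_apply]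
    · intro cc
      rw [Algebra.algebraMap_eq_smul_one (R := k) (A := A), indAlg.cElem_ksmul, map_smul,
        indAlg.ksmul_apply, ← heA, ← hf, hg1, Algebra.algebraMap_eq_smul_one]
    · intro s hs a
      show (ψ (indAlg.cElem 1 ((⟨s, hs⟩ : S) • a)) : G → B) g
          = (⟨g * s * g⁻¹, (hconj s).mp hs⟩ : S') • (ψ (indAlg.cElem 1 a) : G → B) g
      have hsmulc : indAlg.cElem (k := k) (S := S) 1 ((⟨s, hs⟩ : S) • a)
          = s • indAlg.cElem 1 a := by
        apply Subtype.ext; funext x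
        rw [indAlg.smul_apply, indAlg.cElem_apply, indAlg.cElem_apply]
        by_cases hx : x * (1 : G)⁻¹ ∈ S
        · have hx' : (x * s) * (1 : G)⁻¹ ∈ S := by
            simpa using mul_mem (by simpa using hx : x ∈ S) hs
          rw [dif_pos hx, dif_pos hx', ← mul_smul]
          congr 1
          apply Subtype.ext
          simp [mul_assoc]
        · have hx' : ¬ ((x * s) * (1 : G)⁻¹ ∈ S) := by
            intro hmem
            exact hx (by simpa using mul_mem (by simpa using hmem : x * s ∈ S) (inv_mem hs))
          rw [dif_neg hx, dif_neg hx']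
      rw [hsmulc, hψ, indAlg.smul_apply]
      exact indAlg.apply_coset (ψ (indAlg.cElem 1 a)) ((hconj s).mp hs)
  · rintro ⟨g, hconj, φ, hφ⟩
    have hconj' : ∀ s' : S', g⁻¹ * (s' : G) * g ∈ S := by
      intro s'
      rw [hconj]
      have he : g * (g⁻¹ * (s' : G) * g) * g⁻¹ = (s' : G) := by group
      rw [he]
      exact s'.2
    have key : ∀ (s : S) (b : B),
        φ.symm ((⟨g * (s : G) * g⁻¹, (hconj (s : G)).mp s.2⟩ : S') • b) = s • φ.symm b := by
      intro s b
      apply φ.injective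
      rw [φ.apply_symm_apply]
      have h3 := hφ (s : G) s.2 (φ.symm b)
      rw [φ.apply_symm_apply] at h3
      exact h3.symm
    refine ⟨{ toFun := fun r => ⟨fun x => φ ((r : G → A) (g⁻¹ * x)), ?_⟩,
              invFun := fun r => ⟨fun x => φ.symm ((r : G → B) (g * x)), ?_⟩,
              left_inv := ?_, right_inv := ?_,
              map_mul' := ?_, map_add' := ?_, commutes' := ?_ }, ?_⟩
    · intro s' x
      dsimp only
      have ht : g⁻¹ * (s' : G) * g ∈ S := hconj' s'
      have h1 : g⁻¹ * ((s' : G) * x) = ((⟨_, ht⟩ : S) : G) * (g⁻¹ * x) := by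
        show _ = (g⁻¹ * (s' : G) * g) * (g⁻¹ * x)
        group
      rw [h1, r.2 ⟨_, ht⟩ (g⁻¹ * x), hφ _ ht]
      have h2 : ∀ (u : S') (b : B), u = s' → u • b = s' • b := fun u b h => by rw [h]
      exact h2 _ _ (Subtype.ext (by group))
    · intro s x
      dsimp only
      have h1 : g * ((s : G) * x)
          = ((⟨g * (s : G) * g⁻¹, (hconj (s : G)).mp s.2⟩ : S') : G) * (g * x) := by
        show _ = (g * (s : G) * g⁻¹) * (g * x)
        group
      rw [h1, r.2 _ (g * x)]
      exact key s ((r : G → B) (g * x))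
    · intro r
      apply Subtype.ext; funext x
      show φ.symm (φ ((r : G → A) (g⁻¹ * (g * x)))) = (r : G → A) x
      rw [φ.symm_apply_apply, inv_mul_cancel_left]
    · intro r
      apply Subtype.ext; funext x
      show φ (φ.symm ((r : G → B) (g * (g⁻¹ * x)))) = (r : G → B) x
      rw [φ.apply_symm_apply, mul_inv_cancel_left]
    · intro p q
      apply Subtype.ext; funext x
      show φ (((p * q : indAlg k G S A) : G → A) (g⁻¹ * x)) = _
      rw [indAlg.mul_apply, map_mul]
      rfl
    · intro p q
      apply Subtype.ext; funext x
      show φ (((p + q : indAlg k G S A) : G → A) (g⁻¹ * x)) = _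
      rw [indAlg.add_apply, map_add]
      rfl
    · intro cc
      apply Subtype.ext; funext x
      show φ (((algebraMap k (indAlg k G S A) cc : indAlg k G S A) : G → A) (g⁻¹ * x)) = _
      simp [Algebra.algebraMap_eq_smul_one]
    · intro h r
      apply Subtype.ext; funext x
      show φ ((r : G → A) (g⁻¹ * x * h)) = φ ((r : G → A) (g⁻¹ * (x * h)))
      rw [mul_assoc]
end

section
/- Let γ: G → C^1(N,K^*) be such that δ_1(γ_g) = (g·σ)/(σ^g) in B^2(N,K^*) for each g ∈ G (where σ ∈ Z^2(N,K^*)). Then for all g,h ∈ G, the Hochschild differential d_1(γ)(g,h) = (g·γ_h)·(γ_{gh})^{-1}·(γ_g^h) is a group homomorphism N → K^*, and d_1(γ) is a Hochschild 2-cocycle of G with values in the G-bimodule Hom(N,K^*). -/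
section Obstruction

variable (k : Type*) [Field k] (K : Type*) [Field K] [Algebra k K]
variable (G : Type*) [Group G] (Nsub : Subgroup G)

/-- Conjugation inside a normal subgroup. -/
def conjN (hN : Nsub.Normal) (g : G) (x : Nsub) : Nsub :=
  ⟨g * (x : G) * g⁻¹, hN.conj_mem (x : G) x.2 g⟩

/-- The action of a `k`-algebra automorphism of `K` on `K^*`. -/
noncomputable def uAct (ρ : G →* (K ≃ₐ[k] K)) (g : G) : Kˣ →* Kˣ :=
  Units.map (ρ g).toAlgHom.toRingHom.toMonoidHom

variable (hN : Nsub.Normal) (ρ : G →* (K ≃ₐ[k] K))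

/-- The Hochschild differential `d₁(γ)(g,h) = (g·γ_h) (γ_{gh})⁻¹ (γ_g · h)` of a
1-cochain `γ ∈ C¹(G, C¹(N, K^*))`, where `(g·f)(x) = ḡ(f(x))` and `(f·g)(x) = f(gxg⁻¹)`. -/
noncomputable def hochschildD1 (γ : G → Nsub → Kˣ) (g h : G) (x : Nsub) : Kˣ :=
  uAct k K G ρ g (γ h x) * (γ (g * h) x)⁻¹ * γ g (conjN G Nsub hN h x)

end Obstruction

section AuxLemmas

variable (k : Type*) [Field k] (K : Type*) [Field K] [Algebra k K]
variable (G : Type*) [Group G] (Nsub : Subgroup G)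

lemma uAct_uAct (ρ : G →* (K ≃ₐ[k] K)) (g h : G) (x : Kˣ) :
    uAct k K G ρ g (uAct k K G ρ h x) = uAct k K G ρ (g * h) x := by
  ext
  simp [uAct, map_mul ρ]

lemma conjN_mul (hN : Nsub.Normal) (g h : G) (x : Nsub) :
    conjN G Nsub hN (g * h) x = conjN G Nsub hN g (conjN G Nsub hN h x) := by
  apply Subtype.ext
  simp [conjN, mul_assoc]

lemma conjN_mul_right (hN : Nsub.Normal) (g : G) (x y : Nsub) :
    conjN G Nsub hN g (x * y) = conjN G Nsub hN g x * conjN G Nsub hN g y := by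
  apply Subtype.ext
  simp [conjN, mul_assoc]

end AuxLemmas

/-- if `γ : G → C¹(N,K^*)` satisfies `δ₁(γ_g) = (g·σ)/σ^g` for every `g`
(`σ ∈ Z²(N,K^*)`), then each `d₁(γ)(g,h)` is a group homomorphism `N → K^*`, and
`d₁(γ)` is a Hochschild 2-cocycle of `G` with values in `Hom(N,K^*)`. -/
theorem hochschildD1_is_cocycle
    (k : Type*) [Field k] (K : Type*) [Field K] [Algebra k K] [IsGalois k K]
    (G : Type*) [Group G] (Nsub : Subgroup G) (hN : Nsub.Normal)
    (ρ : G →* (K ≃ₐ[k] K)) (hsurj : Function.Surjective ρ)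
    (hker : ∀ g : G, ρ g = 1 ↔ g ∈ Nsub)
    -- `σ ∈ Z²(N, K^*)` (normalized, with trivial `N`-action on `K^*`)
    (σ : Nsub → Nsub → Kˣ)
    (hσ : ∀ x y z : Nsub, σ x y * σ (x * y) z = σ y z * σ x (y * z))
    (hσ1 : ∀ x : Nsub, σ x 1 = 1) (hσ1' : ∀ x : Nsub, σ 1 x = 1)
    -- `γ ∈ C¹(G, C¹(N, K^*))` with `δ₁(γ_g) = (g·σ)/σ^g` for all `g`
    (γ : G → Nsub → Kˣ) (hγ1 : ∀ g : G, γ g 1 = 1) (hγe : ∀ x : Nsub, γ 1 x = 1)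
    (hδ : ∀ (g : G) (x y : Nsub),
      γ g x * γ g y * (γ g (x * y))⁻¹ =
        uAct k K G ρ g (σ x y) *
          (σ (conjN G Nsub hN g x) (conjN G Nsub hN g y))⁻¹) :
    -- `d₁(γ)(g,h) ∈ Hom(N, K^*)`
    (∀ (g h : G) (x y : Nsub),
      hochschildD1 k K G Nsub hN ρ γ g h (x * y) =
        hochschildD1 k K G Nsub hN ρ γ g h x * hochschildD1 k K G Nsub hN ρ γ g h y) ∧
    -- `d₁(γ)` is a Hochschild 2-cocycle of `G` with values in `Hom(N, K^*)`
    (∀ (g h l : G) (x : Nsub),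
      uAct k K G ρ g (hochschildD1 k K G Nsub hN ρ γ h l x) *
        (hochschildD1 k K G Nsub hN ρ γ (g * h) l x)⁻¹ *
        hochschildD1 k K G Nsub hN ρ γ g (h * l) x *
        (hochschildD1 k K G Nsub hN ρ γ g h (conjN G Nsub hN l x))⁻¹ = 1) := by
  have key : ∀ (g : G) (x y : Nsub),
      γ g (x * y) = γ g x * γ g y *
        σ (conjN G Nsub hN g x) (conjN G Nsub hN g y) *
        (uAct k K G ρ g (σ x y))⁻¹ := by
    intro g x y
    have h1 := hδ g x y
    rw [mul_inv_eq_iff_eq_mul] at h1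
    apply Additive.ofMul.injective
    have h2 := congrArg Additive.ofMul h1
    simp only [ofMul_mul, ofMul_inv] at h2 ⊢
    rw [h2]
    abel
  constructor
  · intro g h x y
    simp only [hochschildD1, conjN_mul_right, key, map_mul, map_inv,
      uAct_uAct, ← conjN_mul]
    apply Additive.ofMul.injective
    simp only [ofMul_mul, ofMul_inv]
    abel
  · intro g h l x
    simp only [hochschildD1, conjN_mul, map_mul, map_inv, uAct_uAct, mul_assoc]
    apply Additive.ofMul.injective
    simp only [ofMul_mul, ofMul_inv, ofMul_one]
    abel
end

section
/- With σ ∈ Z^2(N,K^*) fixed, there exists a function γ: G × N → K^* satisfying condition (C3) (γ(gh,x) = ḡ(γ(h,x))γ(g,hxh^{-1})) together with δ_1(γ_g) = (g·σ)/(σ^g) for all g, if and only if the Hochschild cohomology class of d_1(γ) in HH^2(G, Hom(N,K^*)) is zero, for any choice of γ with δ_1(γ_g) = (g·σ)/(σ^g). -/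
/-- `uAct` at the identity is the identity. -/
theorem uAct_one' (k : Type*) [Field k] (K : Type*) [Field K] [Algebra k K]
    (G : Type*) [Group G] (ρ : G →* (K ≃ₐ[k] K)) (u : Kˣ) :
    uAct k K G ρ 1 u = u := by
  simp [uAct]
  rfl

theorem conjN_one (G : Type*) [Group G] (Nsub : Subgroup G) (hN : Nsub.Normal)
    (g : G) : conjN G Nsub hN g 1 = 1 := by
  apply Subtype.ext
  simp [conjN]

theorem conjN_id (G : Type*) [Group G] (Nsub : Subgroup G) (hN : Nsub.Normal)
    (x : Nsub) : conjN G Nsub hN 1 x = x := by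
  apply Subtype.ext
  simp [conjN]


/-- given `σ ∈ Z²(N,K^*)` whose first obstruction vanishes, witnessed by a
choice `γ` with `δ₁(γ_g) = (g·σ)/σ^g`, there exists `γ̄` satisfying both
`δ₁(γ̄_g) = (g·σ)/σ^g` and condition (C3) iff the Hochschild cohomology class of
`d₁(γ)` in `HH²(G, Hom(N,K^*))` vanishes, i.e. `d₁(γ) = d₁(θ)` for some
`θ ∈ C¹(G, Hom(N,K^*))`. -/
theorem second_obstruction
    (k : Type*) [Field k] (K : Type*) [Field K] [Algebra k K] [IsGalois k K]
    (G : Type*) [Group G] (Nsub : Subgroup G) (hN : Nsub.Normal)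
    (ρ : G →* (K ≃ₐ[k] K)) (hsurj : Function.Surjective ρ)
    (hker : ∀ g : G, ρ g = 1 ↔ g ∈ Nsub)
    (σ : Nsub → Nsub → Kˣ)
    (hσ : ∀ x y z : Nsub, σ x y * σ (x * y) z = σ y z * σ x (y * z))
    (hσ1 : ∀ x : Nsub, σ x 1 = 1) (hσ1' : ∀ x : Nsub, σ 1 x = 1)
    -- a choice `γ` with `δ₁(γ_g) = (g·σ)/σ^g` for all `g`
    (γ : G → Nsub → Kˣ) (hγ1 : ∀ g : G, γ g 1 = 1) (hγe : ∀ x : Nsub, γ 1 x = 1)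
    (hδ : ∀ (g : G) (x y : Nsub),
      γ g x * γ g y * (γ g (x * y))⁻¹ =
        uAct k K G ρ g (σ x y) *
          (σ (conjN G Nsub hN g x) (conjN G Nsub hN g y))⁻¹) :
    -- there is `γ̄` with `δ₁(γ̄_g) = (g·σ)/σ^g` satisfying (C3) ...
    (∃ γ' : G → Nsub → Kˣ,
      (∀ (g : G) (x y : Nsub),
        γ' g x * γ' g y * (γ' g (x * y))⁻¹ =
          uAct k K G ρ g (σ x y) *
            (σ (conjN G Nsub hN g x) (conjN G Nsub hN g y))⁻¹) ∧
      (∀ (g h : G) (x : Nsub),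
        γ' (g * h) x = uAct k K G ρ g (γ' h x) * γ' g (conjN G Nsub hN h x))) ↔
    -- ... iff `d₁(γ)` is a Hochschild coboundary: `d₁(γ) = d₁(θ)` for some
    -- `θ ∈ C¹(G, Hom(N, K^*))`
    (∃ θ : G → (Nsub →* Kˣ), θ 1 = 1 ∧
      ∀ (g h : G) (x : Nsub),
        uAct k K G ρ g (θ h x) * (θ (g * h) x)⁻¹ * θ g (conjN G Nsub hN h x) =
          hochschildD1 k K G Nsub hN ρ γ g h x) := by
  constructor
  · rintro ⟨γ', hδ', hC3⟩
    -- γ' at the identity of G is trivial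
    have hγ'e : ∀ x : Nsub, γ' 1 x = 1 := by
      intro x
      have h := hC3 1 1 x
      rw [one_mul, uAct_one', conjN_id] at h
      exact (left_eq_mul.mp h)
    -- γ' of the identity of N is trivial
    have hγ'1 : ∀ g : G, γ' g 1 = 1 := by
      intro g
      have h := hδ' g 1 1
      rw [one_mul, hσ1 1, conjN_one, hσ1 1, map_one, mul_inv_cancel_right] at h
      simpa using h
    refine ⟨fun g => {
      toFun := fun x => γ g x * (γ' g x)⁻¹
      map_one' := by simp only [hγ1 g, hγ'1 g, inv_one, mul_one]
      map_mul' := by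
        intro x y
        have h := (hδ' g x y).trans (hδ g x y).symm
        apply Additive.ofMul.injective
        have h' := congrArg Additive.ofMul h
        simp only [ofMul_mul, ofMul_inv] at h' ⊢
        rw [← sub_eq_zero] at h' ⊢
        first
        | (rw [← h']; abel)
        | (rw [← neg_eq_zero, ← h']; abel) }, ?_, ?_⟩
    · ext x
      simp [hγe, hγ'e]
    · intro g h x
      simp only [MonoidHom.coe_mk, OneHom.coe_mk, hochschildD1, map_mul, map_inv]
      have h2 := hC3 g h x
      apply Additive.ofMul.injective
      have h' := congrArg Additive.ofMul h2
      simp only [ofMul_mul, ofMul_inv] at h' ⊢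
      rw [← sub_eq_zero] at h' ⊢
      first
      | (rw [← h']; abel)
      | (rw [← neg_eq_zero, ← h']; abel)
  · rintro ⟨θ, hθ1, hθ⟩
    refine ⟨fun g x => (θ g x)⁻¹ * γ g x, ?_, ?_⟩
    · intro g x y
      simp only []
      rw [← hδ g x y, map_mul]
      apply Additive.ofMul.injective
      simp only [ofMul_mul, ofMul_inv]
      abel
    · intro g h x
      have h2 := hθ g h x
      simp only [hochschildD1] at h2
      simp only [map_mul, map_inv]

      apply Additive.ofMul.injective
      have h' := congrArg Additive.ofMul h2
      simp only [ofMul_mul, ofMul_inv] at h' ⊢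
      rw [← sub_eq_zero] at h' ⊢
      first
      | (rw [← h']; abel)
      | (rw [← neg_eq_zero, ← h']; abel)
end
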